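/- arXiv:2509.22962 — 2 statements merged into one kernel-verified Lean document; each statement's English description precedes it below -/
import Mathlib

section
/- Let G be a finite abelian group, f : G → C be 1-bounded, and δ ∈ (0,1]. If ‖f‖_{U²(G)} ≥ δ, then there exists a character ξ of G such that |E_{x ∈ G} f(x) conj(ξ(x))| ≥ δ². -/
open Finset Complex
open scoped ComplexConjugate

variable {G : Type*} [AddCommGroup G] [Fintype G]

/-- The Gowers `U²(G)`-norm: the nonnegative fourth root of
`E_{x,k,ℓ ∈ G} f(x) conj(f(x+k)) conj(f(x+ℓ)) f(x+k+ℓ)`. -/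
noncomputable def U2norm (f : G → ℂ) : ℝ :=
  (‖((Fintype.card G : ℂ) ^ 3)⁻¹ * ∑ x : G, ∑ k : G, ∑ l : G,
    f x * (starRingEnd ℂ) (f (x + k)) * (starRingEnd ℂ) (f (x + l)) * f (x + k + l)‖)
      ^ ((1 : ℝ) / 4)

lemma expand4' (f : G → ℂ) (ξ : AddChar G ℂ) :
    ((∑ a, f a * conj (ξ a)) * conj (∑ b, f b * conj (ξ b))) *
      ((∑ c, f c * conj (ξ c)) * conj (∑ d, f d * conj (ξ d))) =
    ∑ a, ∑ c, ∑ b, ∑ d, (f a * conj (f b) * f c * conj (f d)) * ξ (b + d - a - c) := by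
  rw [map_sum]
  simp_rw [map_mul, Complex.conj_conj]
  rw [Finset.sum_mul_sum, Finset.sum_mul_sum]
  simp_rw [Finset.sum_mul_sum]
  refine Finset.sum_congr rfl fun a _ => Finset.sum_congr rfl fun c _ =>
    Finset.sum_congr rfl fun b _ => Finset.sum_congr rfl fun d _ => ?_
  have : ξ (b + d - a - c) = ξ b * ξ d * conj (ξ a) * conj (ξ c) := by
    rw [show b + d - a - c = b + d + -a + -c by abel, AddChar.map_add_eq_mul,
      AddChar.map_add_eq_mul, AddChar.map_add_eq_mul, AddChar.map_neg_eq_conj,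
      AddChar.map_neg_eq_conj]
  rw [this]; ring

lemma key4 (f : G → ℂ) :
    ∑ ξ : AddChar G ℂ,
      ((∑ a, f a * conj (ξ a)) * conj (∑ b, f b * conj (ξ b))) *
        ((∑ c, f c * conj (ξ c)) * conj (∑ d, f d * conj (ξ d))) =
    (Fintype.card G : ℂ) * ∑ x, ∑ k, ∑ l,
      f x * conj (f (x + k)) * conj (f (x + l)) * f (x + k + l) := by
  classical
  simp_rw [expand4']
  calc
    ∑ ξ : AddChar G ℂ, ∑ a, ∑ c, ∑ b, ∑ d,
        (f a * conj (f b) * f c * conj (f d)) * ξ (b + d - a - c)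
      = ∑ a, ∑ c, ∑ b, ∑ d, (f a * conj (f b) * f c * conj (f d)) *
          ∑ ξ : AddChar G ℂ, ξ (b + d - a - c) := by
        rw [Finset.sum_comm]
        refine Finset.sum_congr rfl fun a _ => ?_
        rw [Finset.sum_comm]
        refine Finset.sum_congr rfl fun c _ => ?_
        rw [Finset.sum_comm]
        refine Finset.sum_congr rfl fun b _ => ?_
        rw [Finset.sum_comm]
        exact Finset.sum_congr rfl fun d _ => (Finset.mul_sum _ _ _).symm
    _ = ∑ a, ∑ c, ∑ b, ∑ d, (f a * conj (f b) * f c * conj (f d)) *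
          (if b + d - a - c = 0 then (Fintype.card G : ℂ) else 0) := by
        simp_rw [AddChar.sum_apply_eq_ite]
    _ = ∑ a, ∑ c, ∑ b,
          (f a * conj (f b) * f c * conj (f (a + c - b))) * (Fintype.card G : ℂ) := by
        refine Finset.sum_congr rfl fun a _ => Finset.sum_congr rfl fun c _ =>
          Finset.sum_congr rfl fun b _ => ?_
        rw [Finset.sum_eq_single (a + c - b)]
        · rw [if_pos (by abel)]
        · intro d _ hd
          rw [if_neg, mul_zero]
          intro h0
          exact hd (sub_eq_zero.mp (by rw [show d - (a + c - b) = b + d - a - c by abel]; exact h0))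
        · simp
    _ = ∑ x, ∑ k, ∑ l, (f x * conj (f (x + k)) * conj (f (x + l)) * f (x + k + l)) *
          (Fintype.card G : ℂ) := by
        refine Finset.sum_congr rfl fun x _ => ?_
        rw [Finset.sum_comm, ← Equiv.sum_comp (Equiv.addLeft x)
          (fun b => ∑ c, (f x * conj (f b) * f c * conj (f (x + c - b))) *
            (Fintype.card G : ℂ))]
        refine Finset.sum_congr rfl fun k _ => ?_
        simp only [Equiv.coe_addLeft]
        rw [← Equiv.sum_comp (Equiv.addLeft (x + k))
          (fun c => (f x * conj (f (x + k)) * f c * conj (f (x + c - (x + k)))) *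
            (Fintype.card G : ℂ))]
        refine Finset.sum_congr rfl fun l _ => ?_
        simp only [Equiv.coe_addLeft]
        have h1 : x + (x + k + l) - (x + k) = x + l := by abel
        rw [h1]; ring
    _ = (Fintype.card G : ℂ) * ∑ x, ∑ k, ∑ l,
          f x * conj (f (x + k)) * conj (f (x + l)) * f (x + k + l) := by
        simp_rw [Finset.mul_sum]
        exact Finset.sum_congr rfl fun x _ => Finset.sum_congr rfl fun k _ =>
          Finset.sum_congr rfl fun l _ => mul_comm _ _

lemma key2 (f : G → ℂ) :
    ∑ ξ : AddChar G ℂ, (∑ a, f a * conj (ξ a)) * conj (∑ b, f b * conj (ξ b)) =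
    (Fintype.card G : ℂ) * ∑ a, f a * conj (f a) := by
  classical
  have expand2 : ∀ ξ : AddChar G ℂ,
      (∑ a, f a * conj (ξ a)) * conj (∑ b, f b * conj (ξ b)) =
      ∑ a, ∑ b, (f a * conj (f b)) * ξ (b - a) := by
    intro ξ
    rw [map_sum]
    simp_rw [map_mul, Complex.conj_conj]
    rw [Finset.sum_mul_sum]
    refine Finset.sum_congr rfl fun a _ => Finset.sum_congr rfl fun b _ => ?_
    have : ξ (b - a) = ξ b * conj (ξ a) := by
      rw [sub_eq_add_neg, AddChar.map_add_eq_mul, AddChar.map_neg_eq_conj]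
    rw [this]; ring
  simp_rw [expand2]
  calc
    ∑ ξ : AddChar G ℂ, ∑ a, ∑ b, (f a * conj (f b)) * ξ (b - a)
      = ∑ a, ∑ b, (f a * conj (f b)) * ∑ ξ : AddChar G ℂ, ξ (b - a) := by
        rw [Finset.sum_comm]
        refine Finset.sum_congr rfl fun a _ => ?_
        rw [Finset.sum_comm]
        exact Finset.sum_congr rfl fun b _ => (Finset.mul_sum _ _ _).symm
    _ = ∑ a, (f a * conj (f a)) * (Fintype.card G : ℂ) := by
        refine Finset.sum_congr rfl fun a _ => ?_
        simp_rw [AddChar.sum_apply_eq_ite]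
        rw [Finset.sum_eq_single a]
        · rw [if_pos (sub_self a)]
        · intro b _ hb
          rw [if_neg (fun h0 => hb (sub_eq_zero.mp h0)), mul_zero]
        · simp
    _ = (Fintype.card G : ℂ) * ∑ a, f a * conj (f a) := by
        rw [Finset.mul_sum]
        exact Finset.sum_congr rfl fun a _ => mul_comm _ _

theorem stmt_5 (G : Type*) [AddCommGroup G] [Fintype G] (f : G → ℂ)
    (hf : ∀ x, ‖f x‖ ≤ 1) (δ : ℝ) (hδ : 0 < δ) (hδ1 : δ ≤ 1)
    (h : δ ≤ U2norm f) :
    ∃ ξ : AddChar G ℂ,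
      δ ^ 2 ≤ ‖(Fintype.card G : ℂ)⁻¹ * ∑ x : G, f x * (starRingEnd ℂ) (ξ x)‖ := by
  classical
  set N : ℕ := Fintype.card G with hNdef
  have hN : 0 < N := Fintype.card_pos
  set Nr : ℝ := (N : ℝ) with hNr
  have hNr0 : 0 < Nr := by rw [hNr]; exact_mod_cast hN
  set S : AddChar G ℂ → ℂ := fun ξ => ∑ x, f x * conj (ξ x) with hS
  set T : ℂ := ∑ x, ∑ k, ∑ l,
      f x * conj (f (x + k)) * conj (f (x + l)) * f (x + k + l) with hT
  set A : ℝ := ∑ ξ : AddChar G ℂ, ‖S ξ‖ ^ 4 with hA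
  set B : ℝ := ∑ ξ : AddChar G ℂ, ‖S ξ‖ ^ 2 with hB
  have hA0 : 0 ≤ A := Finset.sum_nonneg fun ξ _ => by positivity
  -- δ^4 ≤ |(N^3)⁻¹ * T|
  have h4 : δ ^ 4 ≤ ‖((N : ℂ) ^ 3)⁻¹ * T‖ := by
    have h1 := pow_le_pow_left₀ hδ.le h 4
    rw [U2norm] at h1
    rwa [← Real.rpow_natCast (‖_‖ ^ ((1:ℝ)/4)) 4,
      ← Real.rpow_mul (norm_nonneg _),
      show (1:ℝ)/4 * (4:ℕ) = 1 by norm_num, Real.rpow_one] at h1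
  have e1 : ∀ z : ℂ, ((‖z‖ ^ 2 : ℝ) : ℂ) = z * conj z := by
    intro z
    rw [Complex.mul_conj]
    exact_mod_cast congrArg Complex.ofReal (Complex.normSq_eq_norm_sq z).symm
  -- |T| = A / Nr
  have hNC : (N : ℂ) ≠ 0 := Nat.cast_ne_zero.2 hN.ne'
  have hAT : ((A : ℝ) : ℂ) = (N : ℂ) * T := by
    rw [hT, ← key4 f, hA]
    push_cast
    refine Finset.sum_congr rfl fun ξ _ => ?_
    have := e1 (S ξ)
    push_cast at this
    calc (‖S ξ‖ : ℂ) ^ 4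
        = ((‖S ξ‖ : ℂ) ^ 2) * ((‖S ξ‖ : ℂ) ^ 2) := by ring
      _ = (S ξ * conj (S ξ)) * (S ξ * conj (S ξ)) := by rw [this]
  have hTabs : ‖T‖ = A / Nr := by
    have hTe : T = ((A / Nr : ℝ) : ℂ) := by
      rw [hNr]
      push_cast
      rw [eq_div_iff hNC, mul_comm]
      exact hAT.symm
    rw [hTe, Complex.norm_real, Real.norm_eq_abs]
    exact abs_of_nonneg (div_nonneg hA0 hNr0.le)
  -- Parseval: B = Nr * ∑ |f|²  ≤ Nr * Nr
  have hBC : ((B : ℝ) : ℂ) = (N : ℂ) * ∑ a, f a * conj (f a) := by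
    rw [← key2 f, hB]
    push_cast
    refine Finset.sum_congr rfl fun ξ _ => ?_
    have h2 := e1 (S ξ)
    push_cast at h2
    exact h2
  have hBeq : B = Nr * ∑ a, ‖f a‖ ^ 2 := by
    have h5 : ((B : ℝ) : ℂ) = ((Nr * ∑ a, ‖f a‖ ^ 2 : ℝ) : ℂ) := by
      rw [hBC, hNr]
      push_cast
      refine congrArg _ (Finset.sum_congr rfl fun a _ => ?_)
      have h6 := e1 (f a)
      push_cast at h6
      exact h6.symm
    exact_mod_cast h5
  have hBle : B ≤ Nr * Nr := by
    rw [hBeq]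
    refine mul_le_mul_of_nonneg_left ?_ hNr0.le
    calc ∑ a, ‖f a‖ ^ 2 ≤ ∑ _a : G, (1 : ℝ) :=
          Finset.sum_le_sum fun a _ => by
            have := hf a; nlinarith [norm_nonneg (f a)]
      _ = Nr := by simp [hNr, hNdef]
  -- choose maximizer
  obtain ⟨ξ₀, -, hmax⟩ := Finset.exists_max_image (univ : Finset (AddChar G ℂ))
    (fun ξ => ‖S ξ‖) ⟨1, mem_univ 1⟩
  set M : ℝ := ‖S ξ₀‖ with hM
  have hM0 : 0 ≤ M := norm_nonneg _
  have hAM : A ≤ M ^ 2 * B := by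
    rw [hA, hB, Finset.mul_sum]
    refine Finset.sum_le_sum fun ξ _ => ?_
    have h1 := hmax ξ (mem_univ ξ)
    have h2 : (0:ℝ) ≤ ‖S ξ‖ := norm_nonneg _
    have h3 : ‖S ξ‖ ^ 2 ≤ M ^ 2 := by nlinarith
    calc ‖S ξ‖ ^ 4
        = ‖S ξ‖ ^ 2 * ‖S ξ‖ ^ 2 := by ring
      _ ≤ M ^ 2 * ‖S ξ‖ ^ 2 := mul_le_mul_of_nonneg_right h3 (by positivity)
  -- combine
  have habs : ‖((N : ℂ) ^ 3)⁻¹ * T‖ = A / Nr ^ 4 := by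
    rw [norm_mul, norm_inv, norm_pow, Complex.norm_natCast, hTabs, ← hNr]
    rw [inv_mul_eq_div, div_div]
    ring
  have hfinal : δ ^ 4 ≤ (M / Nr) ^ 2 := by
    rw [habs] at h4
    have : A / Nr ^ 4 ≤ (M / Nr) ^ 2 := by
      rw [div_pow, div_le_div_iff₀ (by positivity) (by positivity)]
      calc A * Nr ^ 2 ≤ (M ^ 2 * (Nr * Nr)) * Nr ^ 2 := by
            nlinarith [mul_le_mul_of_nonneg_left hBle (sq_nonneg M)]
        _ = M ^ 2 * Nr ^ 4 := by ring
    linarith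
  have hstep : δ ^ 2 ≤ M / Nr := by
    have hm0 : 0 ≤ M / Nr := by positivity
    nlinarith [sq_nonneg (δ ^ 2 - M / Nr), sq_nonneg (δ ^ 2 + M / Nr), pow_pos hδ 2]
  refine ⟨ξ₀, ?_⟩
  have hfin : ‖(N : ℂ)⁻¹ * S ξ₀‖ = M / Nr := by
    rw [norm_mul, norm_inv, Complex.norm_natCast, ← hM, hNr, inv_mul_eq_div]
  show δ ^ 2 ≤ ‖(N : ℂ)⁻¹ * S ξ₀‖
  rw [hfin]
  exact hstep
end

section
/- (Gowers–Cauchy–Schwarz) Let G be a finite abelian group, s ≥ 1, and for each ω ∈ {0,1}^s let f_ω : G → C. Then |E_{x,h₁,…,h_s ∈ G} Π_{ω ∈ {0,1}^s} C^{|ω|} f_ω(x + ω·(h₁,…,h_s))| ≤ Π_{ω ∈ {0,1}^s} ‖f_ω‖_{U^s(G)}, where C denotes complex conjugation applied |ω| = ω₁+⋯+ω_s times. -/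
open Finset Complex

variable {G : Type*} [AddCommGroup G] [Fintype G]

/-- The multiplicative discrete derivative: `Δ_h f(x) = f(x) conj(f(x+h))`. -/
noncomputable def mdd (h : G) (f : G → ℂ) : G → ℂ :=
  fun x => f x * (starRingEnd ℂ) (f (x + h))

/-- `‖f‖_{U^s(G)}^{2^s} = E_{x,h₁,…,h_s ∈ G} Δ_{h₁}⋯Δ_{h_s} f(x)`. -/
noncomputable def gowersPow (s : ℕ) (f : G → ℂ) : ℂ :=
  ((Fintype.card G : ℂ) ^ (s + 1))⁻¹ *
    ∑ h : Fin s → G, ∑ x : G, (List.ofFn h).foldr mdd f x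

/-- The Gowers `U^s(G)`-norm: the nonnegative `2^s`-th root of
`E_{x,h₁,…,h_s ∈ G} Δ_{h₁}⋯Δ_{h_s} f(x)`. -/
noncomputable def gowersNorm (s : ℕ) (f : G → ℂ) : ℝ :=
  (‖gowersPow s f‖) ^ (((2 : ℝ) ^ s)⁻¹)

/-- `C^n z`: complex conjugation applied `n` times. -/
noncomputable def conjIter (n : ℕ) (z : ℂ) : ℂ := ((starRingEnd ℂ) ^[n]) z

/-- `|ω| = ω₁ + ⋯ + ω_s` for `ω ∈ {0,1}^s`. -/
def weight {s : ℕ} (ω : Fin s → Bool) : ℕ := (Finset.univ.filter fun i => ω i).card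

/- ### conjIter lemmas -/

lemma conjIter_succ (n : ℕ) (z : ℂ) :
    conjIter (n + 1) z = (starRingEnd ℂ) (conjIter n z) := by
  simp [conjIter, Function.iterate_succ_apply']

lemma conjIter_add_two (n : ℕ) (z : ℂ) : conjIter (n + 2) z = conjIter n z := by
  simp [conjIter_succ]

lemma abs_conjIter (n : ℕ) (z : ℂ) : ‖(conjIter n z)‖ = ‖z‖ := by
  induction n with
  | zero => rfl
  | succ n ih => rw [conjIter_succ, Complex.norm_conj]; exact ih

/- ### weight lemmas -/

lemma weight_eq_sum {s : ℕ} (ω : Fin s → Bool) :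
    weight ω = ∑ i, if ω i then 1 else 0 := by
  rw [weight, Finset.card_filter]

lemma weight_update_true {s : ℕ} (ω : Fin s → Bool) (i : Fin s) (h : ω i = false) :
    weight (Function.update ω i true) = weight ω + 1 := by
  simp only [weight_eq_sum]
  have h1 : (fun j => if Function.update ω i true j then (1:ℕ) else 0)
      = Function.update (fun j => if ω j then 1 else 0) i 1 := by
    funext j
    rcases eq_or_ne j i with rfl | hj
    · simp
    · simp [Function.update_of_ne hj]
  calc ∑ j, (if Function.update ω i true j then (1:ℕ) else 0)
      = ∑ j, Function.update (fun j => if ω j then (1:ℕ) else 0) i 1 j := by rw [h1]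
    _ = 1 + ∑ j ∈ univ \ {i}, (if ω j then (1:ℕ) else 0) :=
        Finset.sum_update_of_mem (mem_univ i) _ 1
    _ = (∑ j, if ω j then (1:ℕ) else 0) + 1 := by
        rw [Finset.sum_eq_sum_sdiff_singleton_add (mem_univ i)]
        simp [h, add_comm]

/- ### the box inner product T -/

noncomputable def T {G : Type*} [AddCommGroup G] [Fintype G] (s : ℕ)
    (f : (Fin s → Bool) → G → ℂ) : ℂ :=
  ∑ y : Fin s → G × G, ∏ ω : Fin s → Bool,
    conjIter (weight ω) (f ω (∑ i, if ω i then (y i).2 else (y i).1))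

/- ### splitting T at a coordinate -/

noncomputable def R {s : ℕ} (i : Fin s) (z : {j : Fin s // j ≠ i} → G × G)
    (ω : Fin s → Bool) : G :=
  ∑ j : {j : Fin s // j ≠ i}, if ω j.1 then (z j).2 else (z j).1

noncomputable def Pp {s : ℕ} (f : (Fin s → Bool) → G → ℂ) (i : Fin s) (b : Bool)
    (z : {j : Fin s // j ≠ i} → G × G) (a : G) : ℂ :=
  ∏ ω ∈ univ.filter (fun ω => ω i = b), conjIter (weight ω) (f ω (a + R i z ω))

lemma R_update {s : ℕ} (i : Fin s) (z : {j : Fin s // j ≠ i} → G × G)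
    (ω : Fin s → Bool) (b : Bool) : R i z (Function.update ω i b) = R i z ω := by
  refine Finset.sum_congr rfl fun j _ => ?_
  rw [Function.update_of_ne j.2]

lemma expand {s : ℕ} (f : (Fin s → Bool) → G → ℂ) (i : Fin s) :
    T s f = ∑ z : ({j : Fin s // j ≠ i} → G × G),
      (∑ a : G, Pp f i false z a) * (∑ b : G, Pp f i true z b) := by
  rw [T, ← Equiv.sum_comp (Equiv.funSplitAt i (G × G)).symm
      (fun y => ∏ ω : Fin s → Bool,
        conjIter (weight ω) (f ω (∑ k, if ω k then (y k).2 else (y k).1))),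
    Fintype.sum_prod_type, Finset.sum_comm]
  refine Finset.sum_congr rfl fun z _ => ?_
  rw [Fintype.sum_prod_type, Finset.sum_mul_sum]
  refine Finset.sum_congr rfl fun a _ => Finset.sum_congr rfl fun b _ => ?_
  have harg : ∀ ω : Fin s → Bool,
      (∑ k, if ω k then ((Equiv.funSplitAt i (G × G)).symm ((a, b), z) k).2
        else ((Equiv.funSplitAt i (G × G)).symm ((a, b), z) k).1)
      = (if ω i then b else a) + R i z ω := by
    intro ω
    rw [Fintype.sum_eq_sum_compl_add i, add_comm]
    congr 1
    · simp [Equiv.funSplitAt]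
    · rw [Finset.sum_subtype (p := fun k => k ≠ i) ({i}ᶜ : Finset (Fin s)) (by simp)
        (fun k => if ω k then ((Equiv.funSplitAt i (G × G)).symm ((a, b), z) k).2
          else ((Equiv.funSplitAt i (G × G)).symm ((a, b), z) k).1), R]
      refine Finset.sum_congr rfl fun j _ => ?_
      simp [Equiv.funSplitAt, dif_neg j.2]
  simp only [harg]
  rw [← Finset.prod_filter_mul_prod_filter_not univ (fun ω => ω i = false)]
  congr 1
  · refine Finset.prod_congr rfl fun ω hω => ?_
    rw [mem_filter] at hω
    rw [hω.2, if_neg (by simp)]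
  · have hfil : (univ.filter fun ω : Fin s → Bool => ¬ ω i = false)
        = univ.filter (fun ω => ω i = true) := by
      ext ω; simp
    rw [hfil]
    refine Finset.prod_congr rfl fun ω hω => ?_
    rw [mem_filter] at hω
    rw [hω.2, if_pos rfl]

/- ### conjugation identities for Pp -/

lemma conj_conj (z : ℂ) : (starRingEnd ℂ) ((starRingEnd ℂ) z) = z := Complex.conj_conj z

lemma conj_Pp_false {s : ℕ} (f : (Fin s → Bool) → G → ℂ) (i : Fin s)
    (z : {j : Fin s // j ≠ i} → G × G) (b : G) :
    (starRingEnd ℂ) (Pp f i false z b)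
      = Pp (fun ω => f (Function.update ω i false)) i true z b := by
  rw [Pp, map_prod, Pp]
  refine Finset.prod_nbij' (fun ω => Function.update ω i true)
    (fun ω => Function.update ω i false) ?_ ?_ ?_ ?_ ?_
  · intro ω hω; simp
  · intro ω hω; simp
  · intro ω hω
    rw [mem_filter] at hω
    rw [Function.update_idem, ← hω.2, Function.update_eq_self]
  · intro ω hω
    rw [mem_filter] at hω
    rw [Function.update_idem, ← hω.2, Function.update_eq_self]
  · intro ω hω
    rw [mem_filter] at hω
    have e1 : Function.update (Function.update ω i true) i false = ω := by
      rw [Function.update_idem, ← hω.2, Function.update_eq_self]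
    rw [e1, weight_update_true ω i hω.2, R_update, conjIter_succ]

lemma conj_Pp_true {s : ℕ} (f : (Fin s → Bool) → G → ℂ) (i : Fin s)
    (z : {j : Fin s // j ≠ i} → G × G) (a : G) :
    (starRingEnd ℂ) (Pp f i true z a)
      = Pp (fun ω => f (Function.update ω i true)) i false z a := by
  rw [Pp, map_prod, Pp]
  refine Finset.prod_nbij' (fun ω => Function.update ω i false)
    (fun ω => Function.update ω i true) ?_ ?_ ?_ ?_ ?_
  · intro ω hω; simp
  · intro ω hω; simp
  · intro ω hω
    rw [mem_filter] at hω
    rw [Function.update_idem, ← hω.2, Function.update_eq_self]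
  · intro ω hω
    rw [mem_filter] at hω
    rw [Function.update_idem, ← hω.2, Function.update_eq_self]
  · intro ω hω
    rw [mem_filter] at hω
    have e1 : Function.update (Function.update ω i false) i true = ω := by
      rw [Function.update_idem, ← hω.2, Function.update_eq_self]
    have e2 : weight ω = weight (Function.update ω i false) + 1 := by
      conv_lhs => rw [← e1]
      exact weight_update_true _ i (by simp)
    rw [e2, conjIter_succ, conj_conj, e1, R_update]

lemma abs_T_update_false {s : ℕ} (f : (Fin s → Bool) → G → ℂ) (i : Fin s) :
    ‖(T s (fun ω => f (Function.update ω i false)))‖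
      = ∑ z : ({j : Fin s // j ≠ i} → G × G),
          Complex.normSq (∑ a : G, Pp f i false z a) := by
  have h1 : ∀ (z : {j : Fin s // j ≠ i} → G × G) (a : G),
      Pp (fun ω => f (Function.update ω i false)) i false z a = Pp f i false z a := by
    intro z a
    refine Finset.prod_congr rfl fun ω hω => ?_
    rw [mem_filter] at hω
    dsimp only
    rw [← hω.2, Function.update_eq_self]
  rw [expand _ i]
  have h2 : ∀ z : ({j : Fin s // j ≠ i} → G × G),
      (∑ a : G, Pp (fun ω => f (Function.update ω i false)) i false z a) *
        (∑ b : G, Pp (fun ω => f (Function.update ω i false)) i true z b)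
      = (Complex.normSq (∑ a : G, Pp f i false z a) : ℂ) := by
    intro z
    have h3 : (∑ b : G, Pp (fun ω => f (Function.update ω i false)) i true z b)
        = (starRingEnd ℂ) (∑ a : G, Pp f i false z a) := by
      rw [map_sum]
      exact Finset.sum_congr rfl fun b _ => (conj_Pp_false f i z b).symm
    rw [Finset.sum_congr rfl fun a _ => h1 z a, h3, Complex.mul_conj]
  rw [Finset.sum_congr rfl fun z _ => h2 z, ← Complex.ofReal_sum, Complex.norm_real, Real.norm_eq_abs,
    _root_.abs_of_nonneg (Finset.sum_nonneg fun z _ => Complex.normSq_nonneg _)]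

lemma abs_T_update_true {s : ℕ} (f : (Fin s → Bool) → G → ℂ) (i : Fin s) :
    ‖(T s (fun ω => f (Function.update ω i true)))‖
      = ∑ z : ({j : Fin s // j ≠ i} → G × G),
          Complex.normSq (∑ a : G, Pp f i true z a) := by
  have h1 : ∀ (z : {j : Fin s // j ≠ i} → G × G) (a : G),
      Pp (fun ω => f (Function.update ω i true)) i true z a = Pp f i true z a := by
    intro z a
    refine Finset.prod_congr rfl fun ω hω => ?_
    rw [mem_filter] at hω
    dsimp only
    rw [← hω.2, Function.update_eq_self]
  rw [expand _ i]
  have h2 : ∀ z : ({j : Fin s // j ≠ i} → G × G),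
      (∑ a : G, Pp (fun ω => f (Function.update ω i true)) i false z a) *
        (∑ b : G, Pp (fun ω => f (Function.update ω i true)) i true z b)
      = (Complex.normSq (∑ a : G, Pp f i true z a) : ℂ) := by
    intro z
    have h3 : (∑ a : G, Pp (fun ω => f (Function.update ω i true)) i false z a)
        = (starRingEnd ℂ) (∑ a : G, Pp f i true z a) := by
      rw [map_sum]
      exact Finset.sum_congr rfl fun a _ => (conj_Pp_true f i z a).symm
    rw [Finset.sum_congr rfl fun b _ => h1 z b, h3, mul_comm, Complex.mul_conj]
  rw [Finset.sum_congr rfl fun z _ => h2 z, ← Complex.ofReal_sum, Complex.norm_real, Real.norm_eq_abs,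
    _root_.abs_of_nonneg (Finset.sum_nonneg fun z _ => Complex.normSq_nonneg _)]

/- ### the Cauchy–Schwarz step -/

lemma step {s : ℕ} (f : (Fin s → Bool) → G → ℂ) (i : Fin s) :
    ‖(T s f)‖ ^ 2 ≤
      ‖(T s (fun ω => f (Function.update ω i false)))‖ *
        ‖(T s (fun ω => f (Function.update ω i true)))‖ := by
  rw [abs_T_update_false, abs_T_update_true, expand f i]
  calc ‖(∑ z : ({j : Fin s // j ≠ i} → G × G),
        (∑ a : G, Pp f i false z a) * (∑ b : G, Pp f i true z b))‖ ^ 2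
      ≤ (∑ z : ({j : Fin s // j ≠ i} → G × G),
          ‖(∑ a : G, Pp f i false z a)‖ *
            ‖(∑ b : G, Pp f i true z b)‖) ^ 2 := by
        apply pow_le_pow_left₀ (norm_nonneg _)
        refine le_trans (norm_sum_le _ _) ?_
        exact le_of_eq (Finset.sum_congr rfl fun z _ => norm_mul _ _)
    _ ≤ (∑ z : ({j : Fin s // j ≠ i} → G × G),
          ‖(∑ a : G, Pp f i false z a)‖ ^ 2) *
        (∑ z : ({j : Fin s // j ≠ i} → G × G),
          ‖(∑ b : G, Pp f i true z b)‖ ^ 2) :=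
        Finset.sum_mul_sq_le_sq_mul_sq _ _ _
    _ = (∑ z : ({j : Fin s // j ≠ i} → G × G),
          Complex.normSq (∑ a : G, Pp f i false z a)) *
        (∑ z : ({j : Fin s // j ≠ i} → G × G),
          Complex.normSq (∑ a : G, Pp f i true z a)) := by
        rw [Finset.sum_congr rfl fun z _ => Complex.sq_norm _,
          Finset.sum_congr rfl fun z _ => Complex.sq_norm _]

/- ### iterating the Cauchy–Schwarz step -/

def mix {s k : ℕ} (ε : Fin k → Bool) (ω : Fin s → Bool) : Fin s → Bool :=
  fun j => if h : (j : ℕ) < k then ε ⟨j, h⟩ else ω j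

lemma mix_snoc {s k : ℕ} (hk : k < s) (ε : Fin k → Bool) (b : Bool) (ω : Fin s → Bool) :
    mix (Fin.snoc ε b) ω = mix ε (Function.update ω ⟨k, hk⟩ b) := by
  funext j
  rcases lt_trichotomy (j : ℕ) k with h | h | h
  · have h' : (j : ℕ) < k + 1 := Nat.lt_succ_of_lt h
    have hne : j ≠ ⟨k, hk⟩ := Fin.ne_of_val_ne (Nat.ne_of_lt h)
    simp [mix, h, h', Fin.snoc, Function.update_of_ne hne]
  · have h' : (j : ℕ) < k + 1 := by omega
    have hne : j = ⟨k, hk⟩ := Fin.ext h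
    subst hne
    simp [mix, h', Fin.snoc]
  · have h1 : ¬ (j : ℕ) < k + 1 := by omega
    have h2 : ¬ (j : ℕ) < k := by omega
    have hne : j ≠ ⟨k, hk⟩ := Fin.ne_of_val_ne (by simp; omega)
    simp [mix, h1, h2, Function.update_of_ne hne]

lemma mix_zero {s : ℕ} (ε : Fin 0 → Bool) (ω : Fin s → Bool) : mix ε ω = ω := by
  funext j
  simp [mix]

lemma mix_top {s : ℕ} (ε : Fin s → Bool) (ω : Fin s → Bool) : mix ε ω = ε := by
  funext j
  simp [mix, j.isLt]

lemma iterate_step {s : ℕ} (f : (Fin s → Bool) → G → ℂ) :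
    ∀ k, k ≤ s →
      ‖(T s f)‖ ^ (2 ^ k) ≤
        ∏ ε : Fin k → Bool, ‖(T s (fun ω => f (mix ε ω)))‖ := by
  intro k
  induction k with
  | zero =>
    intro _
    rw [pow_zero, pow_one]
    have h0 : ∀ ε : Fin 0 → Bool, (fun ω : Fin s → Bool => f (mix ε ω)) = f := by
      intro ε; funext ω; rw [mix_zero]
    refine le_of_eq ?_
    calc ‖(T s f)‖
        = ∏ _ε : Fin 0 → Bool, ‖(T s f)‖ := by
          rw [Finset.prod_const]; norm_num
      _ = ∏ ε : Fin 0 → Bool, ‖(T s (fun ω => f (mix ε ω)))‖ :=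
          Finset.prod_congr rfl fun ε _ => by rw [h0 ε]
  | succ k ih =>
    intro hk
    have hks : k ≤ s := Nat.le_of_succ_le hk
    have hklt : k < s := hk
    calc ‖(T s f)‖ ^ (2 ^ (k + 1))
        = (‖(T s f)‖ ^ (2 ^ k)) ^ 2 := by
          rw [← pow_mul, pow_succ]
      _ ≤ (∏ ε : Fin k → Bool, ‖(T s (fun ω => f (mix ε ω)))‖) ^ 2 :=
          pow_le_pow_left₀ (pow_nonneg (norm_nonneg _) _) (ih hks) 2
      _ = ∏ ε : Fin k → Bool, ‖(T s (fun ω => f (mix ε ω)))‖ ^ 2 := by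
          rw [Finset.prod_pow]
      _ ≤ ∏ ε : Fin k → Bool,
            (‖(T s (fun ω => f (mix ε (Function.update ω ⟨k, hklt⟩ false))))‖ *
             ‖(T s (fun ω => f (mix ε (Function.update ω ⟨k, hklt⟩ true))))‖) := by
          refine Finset.prod_le_prod (fun ε _ => pow_nonneg (norm_nonneg _) _)
            (fun ε _ => ?_)
          exact step (fun ω => f (mix ε ω)) ⟨k, hklt⟩
      _ = ∏ ε : Fin (k + 1) → Bool, ‖(T s (fun ω => f (mix ε ω)))‖ := by
          rw [← Equiv.prod_comp (Fin.snocEquiv (fun _ => Bool))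
            (fun ε => ‖(T s (fun ω => f (mix ε ω)))‖), Fintype.prod_prod_type]
          rw [Finset.prod_comm]
          refine Finset.prod_congr rfl fun ε _ => ?_
          rw [Fintype.prod_bool, mul_comm]
          have hb : ∀ b : Bool, (fun ω : Fin s → Bool =>
              f (mix ((Fin.snocEquiv fun _ => Bool) (b, ε)) ω))
              = (fun ω : Fin s → Bool => f (mix ε (Function.update ω ⟨k, hklt⟩ b))) := by
            intro b
            funext ω
            rw [show ((Fin.snocEquiv fun _ => Bool) (b, ε)) = Fin.snoc ε b from rfl,
              mix_snoc hklt]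
          rw [hb false, hb true]

/- ### foldr mdd expansion -/

lemma weight_cons {k : ℕ} (b : Bool) (ω : Fin k → Bool) :
    weight (Fin.cons b ω) = (if b then 1 else 0) + weight ω := by
  rw [weight_eq_sum, weight_eq_sum, Fin.sum_univ_succ]
  simp [Fin.cons_zero, Fin.cons_succ]

lemma foldr_mdd : ∀ {s : ℕ} (h : Fin s → G) (g : G → ℂ) (x : G),
    (List.ofFn h).foldr mdd g x
      = ∏ ω : Fin s → Bool,
          conjIter (weight ω) (g (x + ∑ i, if ω i then h i else 0)) := by
  intro s
  induction s with
  | zero =>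
    intro h g x
    simp [conjIter, weight]
  | succ k ih =>
    intro h g x
    have key : (∏ ω : Fin (k+1) → Bool,
          conjIter (weight ω) (g (x + ∑ i, if ω i then h i else 0)))
        = (∏ ω : Fin k → Bool,
            conjIter (weight ω) (g (x + ∑ i, if ω i then h i.succ else 0))) *
          (starRingEnd ℂ) (∏ ω : Fin k → Bool,
            conjIter (weight ω) (g ((x + h 0) + ∑ i, if ω i then h i.succ else 0))) := by
      rw [← Equiv.prod_comp (Fin.consEquiv (fun _ : Fin (k+1) => Bool))
        (fun ω : Fin (k+1) → Bool =>
          conjIter (weight ω) (g (x + ∑ i, if ω i then h i else 0))),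
        Fintype.prod_prod_type, Fintype.prod_bool, mul_comm, map_prod]
      congr 1
      · refine Finset.prod_congr rfl fun ω _ => ?_
        have hc : (Fin.consEquiv fun _ : Fin (k+1) => Bool) (false, ω)
            = Fin.cons false ω := rfl
        rw [hc, weight_cons, Fin.sum_univ_succ]
        simp [Fin.cons_zero, Fin.cons_succ]
      · refine Finset.prod_congr rfl fun ω _ => ?_
        have hc : (Fin.consEquiv fun _ : Fin (k+1) => Bool) (true, ω)
            = Fin.cons true ω := rfl
        rw [hc, weight_cons, Fin.sum_univ_succ]
        rw [show ((if (true : Bool) then 1 else 0) + weight ω) = weight ω + 1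
          by simp [Nat.add_comm], conjIter_succ]
        simp only [Fin.cons_zero, Fin.cons_succ]
        rw [← add_assoc]
        simp
    rw [List.ofFn_succ]
    have hfold : ((h 0 :: List.ofFn (fun i : Fin k => h i.succ)).foldr mdd g) x
        = ((List.ofFn (fun i : Fin k => h i.succ)).foldr mdd g) x *
          (starRingEnd ℂ) (((List.ofFn (fun i : Fin k => h i.succ)).foldr mdd g) (x + h 0)) := rfl
    rw [hfold, ih, ih, key]

/- ### counting: change of variables -/

lemma sum_comp_sum {k : ℕ} (F : G → ℂ) :
    ∑ a : Fin (k + 1) → G, F (∑ i, a i)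
      = (Fintype.card G : ℂ) ^ k * ∑ x : G, F x := by
  rw [← Equiv.sum_comp (Fin.consEquiv (fun _ => G)) (fun a => F (∑ i, a i)),
    Fintype.sum_prod_type]
  have h1 : ∀ (a0 : G) (t : Fin k → G),
      (∑ i, ((Fin.consEquiv (fun _ => G)) (a0, t)) i) = a0 + ∑ i, t i := by
    intro a0 t
    rw [show ((Fin.consEquiv (fun _ => G)) (a0, t)) = Fin.cons a0 t from rfl, Fin.sum_cons]
  rw [Finset.sum_congr rfl fun a0 _ => Finset.sum_congr rfl fun t _ => by rw [h1]]
  rw [Finset.sum_comm]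
  have h2 : ∀ t : Fin k → G, (∑ a0 : G, F (a0 + ∑ i, t i)) = ∑ x : G, F x := by
    intro t
    exact Equiv.sum_comp (Equiv.addRight (∑ i, t i)) F
  rw [Finset.sum_congr rfl fun t _ => h2 t, Finset.sum_const]
  simp [mul_comm]

noncomputable def shear (s : ℕ) : ((Fin s → G) × (Fin s → G)) ≃ (Fin s → G × G) where
  toFun p := fun i => (p.1 i, p.1 i + p.2 i)
  invFun y := (fun i => (y i).1, fun i => (y i).2 - (y i).1)
  left_inv p := by ext i <;> simp
  right_inv y := by ext i <;> simp

set_option maxHeartbeats 1000000 in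
lemma T_eq {s : ℕ} (f : ((Fin (s + 1)) → Bool) → G → ℂ) :
    T (s + 1) f = (Fintype.card G : ℂ) ^ s * ∑ h : Fin (s + 1) → G, ∑ x : G,
      ∏ ω : Fin (s + 1) → Bool,
        conjIter (weight ω) (f ω (x + ∑ i, if ω i then h i else 0)) := by
  rw [T, ← Equiv.sum_comp (shear (G := G) (s + 1))
    (fun y => ∏ ω : Fin (s+1) → Bool,
      conjIter (weight ω) (f ω (∑ i, if ω i then (y i).2 else (y i).1))),
    Fintype.sum_prod_type]
  have h1 : ∀ (a t : Fin (s+1) → G) (ω : Fin (s+1) → Bool),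
      (∑ i, if ω i then ((shear (G := G) (s+1)) (a, t) i).2
        else ((shear (G := G) (s+1)) (a, t) i).1)
      = (∑ i, a i) + ∑ i, if ω i then t i else 0 := by
    intro a t ω
    rw [← Finset.sum_add_distrib]
    refine Finset.sum_congr rfl fun i _ => ?_
    by_cases h : ω i <;> simp [shear, h]
  rw [Finset.sum_congr rfl fun a _ => Finset.sum_congr rfl fun t _ =>
    Finset.prod_congr rfl fun ω _ => by rw [h1 a t ω]]
  rw [Finset.sum_comm]
  rw [show (∑ t : Fin (s+1) → G, ∑ a : Fin (s+1) → G, ∏ ω : Fin (s+1) → Bool,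
      conjIter (weight ω) (f ω ((∑ i, a i) + ∑ i, if ω i then t i else 0)))
    = ∑ t : Fin (s+1) → G, (Fintype.card G : ℂ) ^ s * ∑ x : G,
        ∏ ω : Fin (s+1) → Bool,
          conjIter (weight ω) (f ω (x + ∑ i, if ω i then t i else 0))
    from Finset.sum_congr rfl fun t _ => sum_comp_sum
      (fun x => ∏ ω : Fin (s+1) → Bool,
        conjIter (weight ω) (f ω (x + ∑ i, if ω i then t i else 0)))]
  rw [← Finset.mul_sum]

theorem stmt_11 (G : Type*) [AddCommGroup G] [Fintype G] (s : ℕ) (hs : 1 ≤ s)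
    (f : (Fin s → Bool) → G → ℂ) :
    ‖(((Fintype.card G : ℂ) ^ (s + 1))⁻¹ * ∑ h : Fin s → G, ∑ x : G,
        ∏ ω : Fin s → Bool,
          conjIter (weight ω) (f ω (x + ∑ i : Fin s, if ω i then h i else 0)))‖ ≤
      ∏ ω : Fin s → Bool, gowersNorm s (f ω) := by
  obtain ⟨k, rfl⟩ : ∃ k, s = k + 1 := ⟨s - 1, (Nat.succ_pred_eq_of_pos hs).symm⟩
  have hcard : (0:ℝ) < (Fintype.card G : ℝ) := by exact_mod_cast Fintype.card_pos
  have hcardC : ((Fintype.card G : ℂ)) ≠ 0 := by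
    exact_mod_cast Fintype.card_ne_zero
  set N : ℝ := (Fintype.card G : ℝ) with hN
  set n : ℕ := 2 ^ (k + 1) with hn
  have hnne : n ≠ 0 := by positivity
  set Sf : ℂ := ∑ h : Fin (k+1) → G, ∑ x : G, ∏ ω : Fin (k+1) → Bool,
    conjIter (weight ω) (f ω (x + ∑ i, if ω i then h i else 0)) with hSf
  set b : ((Fin (k+1) → Bool)) → ℝ := fun ε => ‖(gowersPow (k+1) (f ε))‖ with hbdef
  have hbnn : ∀ ε, 0 ≤ b ε := fun ε => norm_nonneg _
  -- |T (const g)| in terms of |gowersPow g|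
  have hb : ∀ g : G → ℂ, ‖(T (k+1) (fun _ => g))‖
      = N ^ (2*k+2) * ‖(gowersPow (k+1) g)‖ := by
    intro g
    have h1 : T (k+1) (fun _ => g) = (Fintype.card G : ℂ) ^ k *
        ∑ h : Fin (k+1) → G, ∑ x : G, (List.ofFn h).foldr mdd g x := by
      rw [T_eq]
      congr 1
      exact (Finset.sum_congr rfl fun h _ => Finset.sum_congr rfl fun x _ =>
        (foldr_mdd h g x)).symm
    have h2 : ((Fintype.card G : ℂ) ^ (k+1+1)) * gowersPow (k+1) g
        = ∑ h : Fin (k+1) → G, ∑ x : G, (List.ofFn h).foldr mdd g x := by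
      rw [gowersPow, ← mul_assoc, mul_inv_cancel₀ (pow_ne_zero _ hcardC), one_mul]
    rw [h1, ← h2, norm_mul, norm_mul, norm_pow, norm_pow, Complex.norm_natCast]
    rw [← hN, ← mul_assoc, ← pow_add]
    congr 2
    omega
  -- |T f| in terms of |Sf|
  have hTf : ‖(T (k+1) f)‖ = N ^ k * ‖Sf‖ := by
    rw [T_eq, norm_mul, norm_pow, Complex.norm_natCast, hSf]
  -- main inequality from iterated Cauchy–Schwarz
  have hmain := iterate_step f (k+1) le_rfl
  have hmix : ∀ ε : Fin (k+1) → Bool,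
      (fun ω => f (mix ε ω)) = (fun _ => f ε) := by
    intro ε; funext ω; rw [mix_top]
  rw [Finset.prod_congr rfl (fun ε _ => by rw [hmix ε]),
    Finset.prod_congr rfl (fun ε _ => hb (f ε)), Finset.prod_mul_distrib,
    Finset.prod_const, hTf, Finset.card_univ] at hmain
  have hcardbool : Fintype.card (Fin (k+1) → Bool) = n := by
    simp [hn]
  rw [hcardbool] at hmain
  -- hmain : (N ^ k * |Sf|) ^ n ≤ (N^(2k+2))^n * ∏ ε, b ε
  have hkey : ‖Sf‖ ^ n ≤ (N ^ (k+2)) ^ n * ∏ ε, b ε := by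
    have h3 : (N ^ k) ^ n * ‖Sf‖ ^ n
        ≤ (N ^ k) ^ n * ((N ^ (k+2)) ^ n * ∏ ε, b ε) := by
      calc (N ^ k) ^ n * ‖Sf‖ ^ n
          = (N ^ k * ‖Sf‖) ^ n := (mul_pow _ _ _).symm
        _ ≤ (N ^ (2*k+2)) ^ n * ∏ ε, b ε := hmain
        _ = (N ^ k) ^ n * ((N ^ (k+2)) ^ n * ∏ ε, b ε) := by
            rw [← mul_assoc, ← mul_pow, ← pow_add]
            congr 3
            omega
    exact le_of_mul_le_mul_left h3 (by positivity)
  -- reduce goal to n-th powers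
  have hLHS : ‖(((Fintype.card G : ℂ) ^ (k+1+1))⁻¹ * Sf)‖
      = (N ^ (k+2))⁻¹ * ‖Sf‖ := by
    rw [norm_mul, norm_inv, norm_pow, Complex.norm_natCast, ← hN]
  rw [hLHS]
  have hRHSn : ∀ ε : Fin (k+1) → Bool, gowersNorm (k+1) (f ε) ^ n = b ε := by
    intro ε
    rw [gowersNorm, ← Real.rpow_natCast
      ((‖(gowersPow (k+1) (f ε))‖) ^ (((2:ℝ) ^ (k+1))⁻¹)) n,
      ← Real.rpow_mul (norm_nonneg _)]
    have : (((2:ℝ) ^ (k+1))⁻¹ * (n : ℝ)) = 1 := by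
      rw [hn]
      push_cast
      rw [inv_mul_cancel₀ (by positivity)]
    rw [this, Real.rpow_one]
  refine le_of_pow_le_pow_left₀ hnne (Finset.prod_nonneg fun ε _ =>
    Real.rpow_nonneg (norm_nonneg _) _) ?_
  rw [← Finset.prod_pow]
  rw [Finset.prod_congr rfl fun ε _ => hRHSn ε]
  calc ((N ^ (k+2))⁻¹ * ‖Sf‖) ^ n
      = ((N ^ (k+2)) ^ n)⁻¹ * ‖Sf‖ ^ n := by
        rw [mul_pow, inv_pow]
    _ ≤ ((N ^ (k+2)) ^ n)⁻¹ * ((N ^ (k+2)) ^ n * ∏ ε, b ε) := by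
        refine mul_le_mul_of_nonneg_left hkey (by positivity)
    _ = ∏ ε, b ε := by
        rw [← mul_assoc, inv_mul_cancel₀ (by positivity), one_mul]
end
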